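/- arXiv:1612.05814 — 2 statements merged into one kernel-verified Lean document; each statement's English description precedes it below -/
import Mathlib

section
/- The number of embedded subsets of an n-set equals the Bell number B_{n+1}: |ℰ^N| = Σ_{k=1}^{n} (k+1)·S_{n,k} = B_{n+1}, where S_{n,k} is the number of partitions of an n-set into k blocks and B_{n+1} is the number of partitions of an (n+1)-set. Equivalently, the cardinality of ℰ^N equals the number of partitions of the set {1,…,n+1}. -/
open scoped BigOperators

/-- `modp n A` is the modular partition `P^A_⊥` of `Fin n` whose unique (possibly)
non-singleton block is `A`, all other blocks being singletons. -/
def modp (n : ℕ) (A : Set (Fin n)) : Setoid (Fin n) where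
  r x y := x = y ∨ (x ∈ A ∧ y ∈ A)
  iseqv := by
    refine ⟨fun _ => Or.inl rfl, ?_, ?_⟩
    · rintro x y (rfl | ⟨hx, hy⟩)
      · exact Or.inl rfl
      · exact Or.inr ⟨hy, hx⟩
    · rintro x y z (rfl | ⟨hx, hy⟩) h
      · exact h
      · rcases h with rfl | ⟨hy', hz⟩
        · exact Or.inr ⟨hx, hy⟩
        · exact Or.inr ⟨hx, hz⟩

/-- The product `X^N = 2^N × 𝒫^N` of the subset lattice and the partition lattice,
ordered componentwise. -/
abbrev XN (n : ℕ) := Set (Fin n) × Setoid (Fin n)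

/-- The closure operator `cl` on `X^N`:  `cl(∅,P) = (∅,P)` and, for `A ≠ ∅`,
`cl(A,P) = (Ā, P ⊔ P^A_⊥)` where `Ā` is the block of `P ⊔ P^A_⊥` containing `A`. -/
def EmbClosure (n : ℕ) (x : XN n) : XN n :=
  ({y | ∃ a ∈ x.1, (x.2 ⊔ modp n x.1) y a}, x.2 ⊔ modp n x.1)

/-- An embedded subset is a pair that coincides with its closure. -/
def IsEmbedded (n : ℕ) (x : XN n) : Prop := EmbClosure n x = x

/-- The lattice `ℰ^N` of embedded subsets, with the induced order. -/
abbrev Emb (n : ℕ) := {x : XN n // IsEmbedded n x}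

lemma modp_le_of_subsingleton {n : ℕ} {A : Set (Fin n)} (h : A.Subsingleton)
    (Q : Setoid (Fin n)) : modp n A ≤ Q := by
  rw [Setoid.le_def]
  intro x y hxy
  rcases hxy with rfl | ⟨hx, hy⟩
  · exact Q.refl' x
  · obtain rfl := h hx hy
    exact Q.refl' x

lemma modp_eq_bot_of_subsingleton {n : ℕ} {A : Set (Fin n)} (h : A.Subsingleton) :
    modp n A = ⊥ :=
  le_antisymm (modp_le_of_subsingleton h ⊥) bot_le

lemma embedded_empty (n : ℕ) (Q : Setoid (Fin n)) : IsEmbedded n (∅, Q) := by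
  unfold IsEmbedded EmbClosure
  refine Prod.ext ?_ ?_
  · simp
  · simpa using sup_eq_left.mpr (modp_le_of_subsingleton Set.subsingleton_empty Q)

lemma embedded_univ_top (n : ℕ) : IsEmbedded n (Set.univ, ⊤) := by
  unfold IsEmbedded EmbClosure
  refine Prod.ext ?_ ?_
  · ext y
    simp only [Set.mem_setOf_eq, Set.mem_univ, iff_true]
    exact ⟨y, trivial, Setoid.refl' _ y⟩
  · exact sup_eq_left.mpr le_top

lemma embedded_singleton (n : ℕ) (i : Fin n) : IsEmbedded n ({i}, ⊥) := by
  have hb : modp n ({i} : Set (Fin n)) = ⊥ :=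
    modp_eq_bot_of_subsingleton Set.subsingleton_singleton
  unfold IsEmbedded EmbClosure
  refine Prod.ext ?_ ?_
  · ext y
    simp only [Set.mem_setOf_eq, hb, sup_idem, Set.mem_singleton_iff]
    constructor
    · rintro ⟨a, ha, hrel⟩
      subst ha
      have h2 : ((⊥ : Setoid (Fin n)) ⊔ modp n {a}) y a := hrel
      rw [hb, sup_idem] at h2
      simpa [Setoid.bot_def] using h2
    · rintro rfl
      exact ⟨y, rfl, Setoid.refl' _ y⟩
  · simp [hb]

/-- The bottom element `(∅, P_⊥)` of `ℰ^N`. -/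
def botE (n : ℕ) : Emb n := ⟨(∅, ⊥), embedded_empty n ⊥⟩

/-- The top element `(N, P^⊤)` of `ℰ^N`. -/
def topE (n : ℕ) : Emb n := ⟨(Set.univ, ⊤), embedded_univ_top n⟩

/-- The atom `({i}, P_⊥)` of `ℰ^N`. -/
def atomS (n : ℕ) (i : Fin n) : Emb n := ⟨({i}, ⊥), embedded_singleton n i⟩

/-- The atom `(∅, [ij])` of `ℰ^N`, where `[ij]` is the atom of the partition lattice
whose unique non-singleton block is the pair `{i, j}`. -/
def atomP (n : ℕ) (i j : Fin n) : Emb n := ⟨(∅, modp n {i, j}), embedded_empty n _⟩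

/-- A pair is an atom candidate: of the form `({i},P_⊥)` or `(∅,[ij])` with `i ≠ j`. -/
def IsAtomPair (n : ℕ) (a : XN n) : Prop :=
  (∃ i : Fin n, a = ({i}, ⊥)) ∨ ∃ i j : Fin n, i ≠ j ∧ a = (∅, modp n {i, j})

/-- The number of blocks `|P|` of a partition. -/
noncomputable def numBlocks {α : Type*} (P : Setoid α) : ℕ := P.classes.ncard

/-- The rank function `r(A,P) = (n − |P|) + min{|A|,1}` of `ℰ^N`. -/
noncomputable def erank (n : ℕ) (x : XN n) : ℕ := (n - numBlocks x.2) + min x.1.ncard 1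

/-- The partition `Q^S` of `S` induced by a partition `Q` of `N`. -/
def indPart {n : ℕ} (S : Set (Fin n)) (Q : Setoid (Fin n)) : Setoid S :=
  Setoid.comap Subtype.val Q

/-- `mu` is the Möbius function of the (finite) poset `α`. -/
def IsMobius {α : Type*} [PartialOrder α] (mu : α → α → ℤ) : Prop :=
  (∀ x, mu x x = 1) ∧
  (∀ x y, ¬x ≤ y → mu x y = 0) ∧
  (∀ x y, x < y → mu x y = -∑ᶠ z ∈ Set.Ico x y, mu x z)

/-!
An embedded subset `(A, P)` is exactly a partition `P` of `N` together with a marked block `A`,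
or with no marked block (`A = ∅`). Hence `|ℰ^N| = ∑_P (|P| + 1)`. A partition of `N ∪ {n + 1}`
is the same datum: its restriction to `N`, with the block that the new point joins marked
(no mark when the new point is a singleton).
-/

open Setoid

instance Setoid.instFinite {α : Type*} [Finite α] : Finite (Setoid α) :=
  Finite.of_injective (fun r : Setoid α => (r : α → α → Prop)) fun _ _ h =>
    Setoid.ext fun a b => iff_of_eq (congrFun₂ h a b)

def Equiv.setoidCongr {α β : Type*} (e : α ≃ β) : Setoid α ≃ Setoid β where
  toFun r := r.comap e.symm
  invFun s := s.comap e
  left_inv r := Setoid.ext fun x y => by simp [comap_rel]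
  right_inv s := Setoid.ext fun x y => by simp [comap_rel]

/-- A partition together with a marked block, where `∅` stands for "no block marked". -/
abbrev MarkedPartition (α : Type*) := {x : Set α × Setoid α // x.1 ∈ insert ∅ x.2.classes}

section Partitions

variable {α : Type*}

theorem numBlocks_eq_card_quotient (P : Setoid α) : numBlocks P = Nat.card (Quotient P) := by
  rw [numBlocks, ← Nat.card_coe_set_eq, Nat.card_congr P.quotientEquivClasses]

theorem numBlocks_le_card [Finite α] (P : Setoid α) : numBlocks P ≤ Nat.card α := by
  rw [numBlocks_eq_card_quotient]
  exact Nat.card_le_card_of_surjective _ Quotient.mk_surjective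

theorem one_le_numBlocks [Finite α] [Nonempty α] (P : Setoid α) : 1 ≤ numBlocks P := by
  have : Nonempty (Quotient P) := .map (Quotient.mk P) ‹_›
  rw [numBlocks_eq_card_quotient]
  exact Nat.card_pos

theorem card_insert_empty_classes [Finite α] (P : Setoid α) :
    Nat.card ↥(insert ∅ P.classes) = numBlocks P + 1 := by
  rw [Nat.card_coe_set_eq, Set.ncard_insert_of_notMem empty_notMem_classes, numBlocks]

def MarkedPartition.equivSigma : MarkedPartition α ≃ Σ P : Setoid α, ↥(insert ∅ P.classes) where
  toFun x := ⟨x.1.2, x.1.1, x.2⟩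
  invFun y := ⟨(y.2, y.1), y.2.2⟩
  left_inv _ := rfl
  right_inv _ := rfl

theorem MarkedPartition.card_eq_sum [Finite α] [Nonempty α] :
    Nat.card (MarkedPartition α) =
      ∑ k ∈ Finset.Icc 1 (Nat.card α), (k + 1) * Nat.card {P : Setoid α // numBlocks P = k} := by
  classical
  have := Fintype.ofFinite (Setoid α)
  rw [Nat.card_congr equivSigma, Nat.card_sigma]
  simp_rw [card_insert_empty_classes]
  rw [← Finset.sum_fiberwise_of_maps_to (g := numBlocks) (t := Finset.Icc 1 (Nat.card α))
    fun P _ => Finset.mem_Icc.2 ⟨one_le_numBlocks P, numBlocks_le_card P⟩]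
  refine Finset.sum_congr rfl fun k _ => ?_
  rw [Finset.sum_congr rfl fun P hP => by rw [(Finset.mem_filter.1 hP).2], Finset.sum_const,
    smul_eq_mul, Nat.card_eq_fintype_card, Fintype.card_subtype, mul_comm]

end Partitions

namespace Setoid

variable {α : Type*} {P : Setoid α} {A : Set α} {x y : α}

theorem setOf_rel_eq_setOf_rel_iff : {z | P z x} = {z | P z y} ↔ P x y :=
  ⟨fun h => (h ▸ P.refl' x : x ∈ {z | P z y}),
    fun h => Set.ext fun _ => ⟨fun hz => P.trans' hz h, fun hz => P.trans' hz (P.symm' h)⟩⟩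

/-- `none` joins the block `A` of `P`, or is a singleton when `A = ∅`. Written as a kernel so
that it is an equivalence for free. -/
def extendOption (P : Setoid α) (A : Set α) : Setoid (Option α) :=
  ker fun u => u.elim A fun x => {z | P z x}

theorem extendOption_some_some : P.extendOption A (some x) (some y) ↔ P x y :=
  ker_def.trans setOf_rel_eq_setOf_rel_iff

theorem extendOption_some_none (hA : A ∈ insert ∅ P.classes) :
    P.extendOption A (some x) none ↔ x ∈ A := by
  change {z | P z x} = A ↔ x ∈ A
  rcases hA with rfl | ⟨a, rfl⟩
  · exact iff_of_false (Set.nonempty_iff_ne_empty.1 ⟨x, P.refl' x⟩) (Set.notMem_empty x)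
  · exact setOf_rel_eq_setOf_rel_iff

theorem setOf_rel_none_mem_insert_empty_classes (Q : Setoid (Option α)) :
    {a | Q (some a) none} ∈ insert ∅ (Q.comap some).classes := by
  rcases Set.eq_empty_or_nonempty {a | Q (some a) none} with h | ⟨a, ha⟩
  · exact Or.inl h
  · exact Or.inr ⟨a, Set.ext fun x =>
      ⟨fun hx => Q.trans' hx (Q.symm' ha), fun hx => Q.trans' hx ha⟩⟩

def optionEquivMarkedPartition : Setoid (Option α) ≃ MarkedPartition α where
  toFun Q := ⟨({a | Q (some a) none}, Q.comap some), setOf_rel_none_mem_insert_empty_classes Q⟩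
  invFun x := x.1.2.extendOption x.1.1
  left_inv Q := by
    have hA := setOf_rel_none_mem_insert_empty_classes Q
    refine Setoid.ext ?_
    rintro (_ | _) (_ | _)
    · exact iff_of_true rfl (Q.refl' none)
    · exact (comm' _).trans ((extendOption_some_none hA).trans (comm' Q))
    · exact extendOption_some_none hA
    · exact extendOption_some_some
  right_inv x :=
    Subtype.ext (Prod.ext (Set.ext fun _ => extendOption_some_none x.2)
      (Setoid.ext fun _ _ => extendOption_some_some))

end Setoid

theorem modp_le_iff {n : ℕ} {A : Set (Fin n)} {P : Setoid (Fin n)} :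
    modp n A ≤ P ↔ ∀ x ∈ A, ∀ y ∈ A, P x y :=
  ⟨fun h _ hx _ hy => h (Or.inr ⟨hx, hy⟩), fun h x y hxy =>
    hxy.elim (fun e => e ▸ P.refl' x) fun ⟨hx, hy⟩ => h x hx y hy⟩

theorem isEmbedded_iff_mem_insert_empty_classes {n : ℕ} {x : XN n} :
    IsEmbedded n x ↔ x.1 ∈ insert ∅ x.2.classes := by
  obtain ⟨A, P⟩ := x
  change IsEmbedded n (A, P) ↔ A ∈ insert ∅ P.classes
  constructor
  · intro h
    obtain ⟨hA, hP⟩ := Prod.mk.inj h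
    have hle : modp n A ≤ P := sup_eq_left.mp hP
    rw [hP] at hA
    rcases A.eq_empty_or_nonempty with hA0 | ⟨a, ha⟩
    · exact Or.inl hA0
    · exact Or.inr ⟨a, Set.ext fun x =>
        ⟨fun hx => modp_le_iff.1 hle x hx a ha, fun hx => hA ▸ ⟨a, ha, hx⟩⟩⟩
  · rintro (rfl | ⟨a, rfl⟩)
    · exact embedded_empty n P
    · have hP : P ⊔ modp n {x | P x a} = P :=
        sup_eq_left.2 (modp_le_iff.2 fun x hx y hy => P.trans' hx (P.symm' hy))
      refine Prod.ext ?_ hP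
      change {y | ∃ b ∈ {x | P x a}, (P ⊔ modp n {x | P x a}) y b} = {x | P x a}
      rw [hP]
      exact Set.ext fun y => ⟨fun ⟨b, hb, hyb⟩ => P.trans' hyb hb, fun hy => ⟨a, P.refl' a, hy⟩⟩

def embEquivMarkedPartition (n : ℕ) : Emb n ≃ MarkedPartition (Fin n) :=
  Equiv.subtypeEquivRight fun _ => isEmbedded_iff_mem_insert_empty_classes

theorem card_embedded_eq_bell (n : ℕ) (hn : 1 ≤ n) :
    Nat.card (Emb n) =
      ∑ k ∈ Finset.Icc 1 n, (k + 1) * Nat.card {P : Setoid (Fin n) // numBlocks P = k} ∧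
    Nat.card (Emb n) = Nat.card (Setoid (Fin (n + 1))) := by
  have : Nonempty (Fin n) := ⟨⟨0, hn⟩⟩
  refine ⟨?_, Nat.card_congr ?_⟩
  · rw [Nat.card_congr (embEquivMarkedPartition n), MarkedPartition.card_eq_sum, Nat.card_fin]
  · exact (embEquivMarkedPartition n).trans
      (optionEquivMarkedPartition.symm.trans (finSuccEquiv n).symm.setoidCongr)
end

section
/- (Steinitz exchange, Proposition 1.) The closure cl satisfies the exchange axiom on atoms: for every embedded subset (A,P) ∈ ℰ^N and every pair of atoms a, b of ℰ^N (each of the form ({i},P_⊥) for i ∈ N or (∅,[ij]) for i < j) with a ⋢ (A,P) and b ⋢ (A,P), if b ⊑ cl((A,P) ⊔ a), then a ⊑ cl((A,P) ⊔ b). -/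
open scoped BigOperators

/-!
Adjoin a point `0` to `N`. An embedded subset `(A, P)` becomes the partition of `N ∪ {0}` in
which `0` joins the block `A` (and stays alone when `A = ∅`); the atoms `({i}, P_⊥)` and
`(∅, [ij])` become the atoms `[0i]` and `[ij]`, and `cl((A, P) ⊔ a)` becomes the join with the
corresponding atom. Exchange is then the exchange property of a partition lattice: if `k, l` are
joined in `R ∨ [ij]` but not in `R`, one of them is `R`-equivalent to `i` and the other to `j`,
so `i, j` are joined in `R ∨ [kl]`.
-/

/-- For an equivalence `r`, this is the join `r ⊔ [pq]` with the atom linking `p` and `q`. -/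
def joinAtom {β : Type*} (r : β → β → Prop) (p q s t : β) : Prop :=
  r s t ∨ (r s p ∨ r s q) ∧ (r t p ∨ r t q)

theorem Equivalence.joinAtom_exchange {β : Type*} {r : β → β → Prop} (hr : Equivalence r)
    {p q u v : β} (huv : ¬r u v) (h : joinAtom r p q u v) : joinAtom r u v p q := by
  rcases h with h | ⟨hu | hu, hv | hv⟩
  · exact absurd h huv
  · exact absurd (hr.trans hu (hr.symm hv)) huv
  · exact Or.inr ⟨Or.inl (hr.symm hu), Or.inr (hr.symm hv)⟩
  · exact Or.inr ⟨Or.inr (hr.symm hv), Or.inl (hr.symm hu)⟩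
  · exact absurd (hr.trans hu (hr.symm hv)) huv

section

variable {n : ℕ}

lemma sup_modp_iff (P : Setoid (Fin n)) (S : Set (Fin n)) (u v : Fin n) :
    (P ⊔ modp n S) u v ↔ P u v ∨ (∃ s ∈ S, P u s) ∧ ∃ s ∈ S, P v s := by
  let M : Setoid (Fin n) :=
    { r := fun u v => P u v ∨ (∃ s ∈ S, P u s) ∧ ∃ s ∈ S, P v s
      iseqv := by
        refine ⟨fun u => Or.inl (P.refl' u), ?_, ?_⟩
        · rintro u v (h | ⟨hu, hv⟩)
          exacts [Or.inl (P.symm' h), Or.inr ⟨hv, hu⟩]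
        · rintro u v w (h | ⟨hu, ⟨s, hs, hvs⟩⟩) (h' | ⟨⟨t, ht, hvt⟩, hw⟩)
          · exact Or.inl (P.trans' h h')
          · exact Or.inr ⟨⟨t, ht, P.trans' h hvt⟩, hw⟩
          · exact Or.inr ⟨hu, s, hs, P.trans' (P.symm' h') hvs⟩
          · exact Or.inr ⟨hu, hw⟩ }
  suffices P ⊔ modp n S = M by rw [this]; rfl
  refine le_antisymm (sup_le (fun _ _ h => Or.inl h) ?_) fun u v huv => ?_
  · rintro u v (rfl | ⟨hu, hv⟩)
    exacts [M.refl' u, Or.inr ⟨⟨u, hu, P.refl' u⟩, v, hv, P.refl' v⟩]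
  · have hP : P ≤ P ⊔ modp n S := le_sup_left
    have hS : modp n S ≤ P ⊔ modp n S := le_sup_right
    rcases huv with h | ⟨⟨s, hs, hus⟩, t, ht, hvt⟩
    · exact hP h
    · exact Setoid.trans' _ (Setoid.trans' _ (hP hus) (hS (Or.inr ⟨hs, ht⟩))) (hP (P.symm' hvt))

lemma sup_modp_pair_iff (P : Setoid (Fin n)) (i j u v : Fin n) :
    (P ⊔ modp n {i, j}) u v ↔ P u v ∨ (P u i ∨ P u j) ∧ (P v i ∨ P v j) := by
  simp [sup_modp_iff]

lemma modp_pair_le_iff {i j : Fin n} {Q : Setoid (Fin n)} : modp n {i, j} ≤ Q ↔ Q i j := by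
  refine ⟨fun h => h (Or.inr ⟨Or.inl rfl, Or.inr rfl⟩), fun h => ?_⟩
  rintro u v (rfl | ⟨rfl | rfl, rfl | rfl⟩)
  exacts [Q.refl' _, Q.refl' _, h, Q.symm' h, Q.refl' _]

lemma sup_singleton_bot_eq (x : XN n) (i : Fin n) : x ⊔ ({i}, ⊥) = (x.1 ∪ {i}, x.2) :=
  Prod.ext rfl (sup_bot_eq _)

lemma sup_empty_eq (x : XN n) (Q : Setoid (Fin n)) : x ⊔ (∅, Q) = (x.1, x.2 ⊔ Q) :=
  Prod.ext (Set.union_empty _) rfl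

lemma mem_embClosure_iff (B : Set (Fin n)) (Q : Setoid (Fin n)) (v : Fin n) :
    v ∈ (EmbClosure n (B, Q)).1 ↔ ∃ c ∈ B, Q v c := by
  change (∃ c ∈ B, (Q ⊔ modp n B) v c) ↔ _
  simp only [sup_modp_iff]
  exact ⟨fun ⟨c, hc, h⟩ => h.elim (fun h => ⟨c, hc, h⟩) (·.1), fun ⟨c, hc, h⟩ => ⟨c, hc, Or.inl h⟩⟩

lemma rel_embClosure_iff (B : Set (Fin n)) (Q : Setoid (Fin n)) (u v : Fin n) :
    (EmbClosure n (B, Q)).2 u v ↔ Q u v ∨ (∃ c ∈ B, Q u c) ∧ ∃ c ∈ B, Q v c :=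
  sup_modp_iff _ _ _ _

lemma embClosure_snd_of_modp_le {B : Set (Fin n)} {Q : Setoid (Fin n)} (h : modp n B ≤ Q) :
    (EmbClosure n (B, Q)).2 = Q :=
  sup_eq_left.2 h

/-- The partition of `N ∪ {0}` attached to `x`, with `none` playing the added point `0`. -/
def optionRel (x : XN n) : Option (Fin n) → Option (Fin n) → Prop
  | none, none => True
  | none, some v | some v, none => v ∈ x.1
  | some u, some v => x.2 u v

lemma singleton_le_iff_optionRel (k : Fin n) (y : XN n) :
    (({k}, ⊥) : XN n) ≤ y ↔ optionRel y none (some k) := by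
  simp [Prod.le_def, optionRel]

lemma pair_le_iff_optionRel (k l : Fin n) (y : XN n) :
    ((∅, modp n {k, l}) : XN n) ≤ y ↔ optionRel y (some k) (some l) := by
  simp [Prod.le_def, optionRel, modp_pair_le_iff]

namespace IsEmbedded

variable {x : XN n}

lemma modp_le (hx : IsEmbedded n x) : modp n x.1 ≤ x.2 := by
  rw [← congrArg Prod.snd hx]
  exact le_sup_right

lemma rel_of_mem (hx : IsEmbedded n x) {u v : Fin n} (hu : u ∈ x.1) (hv : v ∈ x.1) :
    x.2 u v :=
  hx.modp_le (Or.inr ⟨hu, hv⟩)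

lemma mem_of_rel (hx : IsEmbedded n x) {u v : Fin n} (hu : u ∈ x.1) (h : x.2 v u) :
    v ∈ x.1 := by
  rw [← hx, ← Prod.mk.eta (p := x), mem_embClosure_iff]
  exact ⟨u, hu, h⟩

lemma exists_rel_iff (hx : IsEmbedded n x) {v : Fin n} : (∃ c ∈ x.1, x.2 v c) ↔ v ∈ x.1 :=
  ⟨fun ⟨_, hc, h⟩ => hx.mem_of_rel hc h, fun hv => ⟨v, hv, x.2.refl' v⟩⟩

lemma exists_rel_iff' (hx : IsEmbedded n x) {v : Fin n} : (∃ c ∈ x.1, x.2 c v) ↔ v ∈ x.1 :=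
  ⟨fun ⟨_, hc, h⟩ => hx.mem_of_rel hc (x.2.symm' h), fun hv => ⟨v, hv, x.2.refl' v⟩⟩

lemma equivalence_optionRel (hx : IsEmbedded n x) : Equivalence (optionRel x) where
  refl s := by cases s <;> simp [optionRel]
  symm {s t} h := by
    cases s <;> cases t <;> simp_all [optionRel, x.2.comm']
  trans {s t w} hst htw := by
    cases s <;> cases t <;> cases w <;> simp only [optionRel] at hst htw ⊢
    exacts [htw, hx.mem_of_rel hst (x.2.symm' htw), hst,
      hx.rel_of_mem hst htw, hx.mem_of_rel htw hst, x.2.trans' hst htw]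

lemma mem_embClosure_sup_singleton (hx : IsEmbedded n x) (i v : Fin n) :
    v ∈ (EmbClosure n (x ⊔ ({i}, ⊥))).1 ↔ v ∈ x.1 ∨ x.2 v i := by
  rw [sup_singleton_bot_eq, mem_embClosure_iff]
  simp [or_and_right, exists_or, hx.exists_rel_iff, or_comm]

lemma rel_embClosure_sup_singleton (hx : IsEmbedded n x) (i u v : Fin n) :
    (EmbClosure n (x ⊔ ({i}, ⊥))).2 u v ↔
      x.2 u v ∨ (u ∈ x.1 ∨ x.2 u i) ∧ (v ∈ x.1 ∨ x.2 v i) := by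
  rw [sup_singleton_bot_eq, rel_embClosure_iff]
  simp only [Set.mem_union, Set.mem_singleton_iff, or_and_right, exists_or, exists_eq_left,
    hx.exists_rel_iff, or_comm]

lemma mem_embClosure_sup_pair (hx : IsEmbedded n x) (i j v : Fin n) :
    v ∈ (EmbClosure n (x ⊔ (∅, modp n {i, j}))).1 ↔
      v ∈ x.1 ∨ (x.2 v i ∨ x.2 v j) ∧ (i ∈ x.1 ∨ j ∈ x.1) := by
  rw [sup_empty_eq, mem_embClosure_iff]
  simp only [sup_modp_pair_iff, and_or_left, exists_or, and_left_comm (b := _ ∨ _),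
    exists_and_left, hx.exists_rel_iff, hx.exists_rel_iff']

lemma rel_embClosure_sup_pair (hx : IsEmbedded n x) (i j u v : Fin n) :
    (EmbClosure n (x ⊔ (∅, modp n {i, j}))).2 u v ↔
      x.2 u v ∨ (x.2 u i ∨ x.2 u j) ∧ (x.2 v i ∨ x.2 v j) := by
  rw [sup_empty_eq, embClosure_snd_of_modp_le (hx.modp_le.trans le_sup_left), sup_modp_pair_iff]

lemma optionRel_embClosure_sup_singleton (hx : IsEmbedded n x) (i : Fin n)
    (s t : Option (Fin n)) :
    optionRel (EmbClosure n (x ⊔ ({i}, ⊥))) s t ↔ joinAtom (optionRel x) none (some i) s t := by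
  cases s <;> cases t <;>
    simp [optionRel, joinAtom, hx.mem_embClosure_sup_singleton, hx.rel_embClosure_sup_singleton]

lemma optionRel_embClosure_sup_pair (hx : IsEmbedded n x) (i j : Fin n)
    (s t : Option (Fin n)) :
    optionRel (EmbClosure n (x ⊔ (∅, modp n {i, j}))) s t ↔
      joinAtom (optionRel x) (some i) (some j) s t := by
  cases s <;> cases t <;>
    simp [optionRel, joinAtom, hx.mem_embClosure_sup_pair, hx.rel_embClosure_sup_pair, and_comm]

end IsEmbedded

lemma IsAtomPair.exists_link {a x : XN n} (ha : IsAtomPair n a) (hx : IsEmbedded n x) :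
    ∃ p q, (∀ y, a ≤ y ↔ optionRel y p q) ∧
      ∀ s t, optionRel (EmbClosure n (x ⊔ a)) s t ↔ joinAtom (optionRel x) p q s t := by
  rcases ha with ⟨i, rfl⟩ | ⟨i, j, -, rfl⟩
  · exact ⟨none, some i, singleton_le_iff_optionRel i, hx.optionRel_embClosure_sup_singleton i⟩
  · exact ⟨some i, some j, pair_le_iff_optionRel i j, hx.optionRel_embClosure_sup_pair i j⟩

end

theorem steinitz_exchange_general (n : ℕ) (x a b : XN n)
    (hx : IsEmbedded n x) (ha : IsAtomPair n a) (hb : IsAtomPair n b)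
    (hbx : ¬b ≤ x) (h : b ≤ EmbClosure n (x ⊔ a)) :
    a ≤ EmbClosure n (x ⊔ b) := by
  obtain ⟨p, q, ha_le, ha_closure⟩ := ha.exists_link hx
  obtain ⟨u, v, hb_le, hb_closure⟩ := hb.exists_link hx
  rw [hb_le, ha_closure] at h
  rw [hb_le] at hbx
  rw [ha_le, hb_closure]
  exact hx.equivalence_optionRel.joinAtom_exchange hbx h

theorem steinitz_exchange (n : ℕ) (hn : 1 ≤ n) (x a b : XN n)
    (hx : IsEmbedded n x) (ha : IsAtomPair n a) (hb : IsAtomPair n b)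
    (hax : ¬a ≤ x) (hbx : ¬b ≤ x) (h : b ≤ EmbClosure n (x ⊔ a)) :
    a ≤ EmbClosure n (x ⊔ b) :=
  steinitz_exchange_general n x a b hx ha hb hbx h
end
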